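/- Let n ≥ 3 be an integer and let a = (a₁,…,aₙ) be a tuple of integers with a₁ ≥ ⋯ ≥ aₙ ≥ 0 and a₁+⋯+aₙ even. Then C′_n(a) = 8n+4 if and only if a = 2ε₁+2ε₂, or n = 7 and a = ε₁+ε₂+ε₃+ε₄+ε₅+ε₆. -/

import Mathlib

open Finset

/-- The Casimir number `C′_n(a) = Σ_{i=1}^{n} aᵢ(aᵢ + 2n + 2 − 2i)` for `sp(n)`. -/
def casimirSp (n : ℕ) (a : Fin n → ℤ) : ℤ :=
  ∑ i : Fin n, a i * (a i + 2 * (n : ℤ) + 2 - 2 * ((i.1 : ℤ) + 1))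

/-- The tuple `ε₁ + ⋯ + ε_k` (integer entries). -/
def epsSumZ (n k : ℕ) : Fin n → ℤ := fun j => if (j.1 : ℕ) < k then 1 else 0

/-- The tuple `2ε₁ + 2ε₂`. -/
def twoEps1TwoEps2Z (n : ℕ) : Fin n → ℤ := fun j => if j.1 < 2 then 2 else 0

/-!
Let `k_v = #{i | aᵢ > v}` be the column lengths of the Young diagram of `a`. Counting the
contribution `2n − 2i + 2v + 1` of each cell `(i, v)` (both indices from `0`) gives
`C′_n(a) = Σ_v k_v (2n + 2v + 2 − k_v)`. The summand `a₁(a₁ + 2n)` of `C′_n(a)` forces `a₁ ≤ 3`,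
so only `k₀ ≥ k₁ ≥ k₂` occur, and `k₀(2n + 2 − k₀) ≤ 8n + 4` forces `k₀ ≤ 6`; the remaining
finitely many column profiles are checked directly.
-/

theorem Finset.sum_range_ite_lt {M : Type*} [AddCommMonoid M] {k m : ℕ} (hkm : k ≤ m)
    (g : ℕ → M) : ∑ j ∈ range m, (if j < k then g j else 0) = ∑ j ∈ range k, g j := by
  rw [← sum_filter]
  congr 1
  ext j
  simp only [mem_filter, mem_range]
  omega

theorem Fin.sum_ite_val_lt {M : Type*} [AddCommMonoid M] {k n : ℕ} (hkn : k ≤ n)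
    (g : ℕ → M) : ∑ i : Fin n, (if i.1 < k then g i else 0) = ∑ j ∈ range k, g j := by
  rw [Fin.sum_univ_eq_sum_range (fun j => if j < k then g j else 0), sum_range_ite_lt hkn]

theorem sum_range_sub_two_mul (k : ℕ) (d : ℤ) :
    ∑ j ∈ range k, (d - 2 * j) = k * (d + 1 - k) := by
  induction k with
  | zero => simp
  | succ k ih => rw [sum_range_succ, ih]; push_cast; ring

theorem sum_range_levels_of_le {x : ℤ} {m : ℕ} (hx₀ : 0 ≤ x) (hxm : x ≤ m) (f : ℕ → ℤ) :
    ∑ v ∈ range m, (if (v : ℤ) < x then f v else 0) = ∑ v ∈ range x.toNat, f v := by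
  lift x to ℕ using hx₀
  simp only [Nat.cast_lt, Int.toNat_natCast]
  exact sum_range_ite_lt (by exact_mod_cast hxm) f

theorem eq_sum_range_levels {x : ℤ} {m : ℕ} (hx₀ : 0 ≤ x) (hxm : x ≤ m) :
    x = ∑ v ∈ range m, (if (v : ℤ) < x then 1 else 0) := by
  rw [sum_range_levels_of_le hx₀ hxm]
  simp [hx₀]

theorem mul_add_eq_sum_range_levels {x : ℤ} {m : ℕ} (hx₀ : 0 ≤ x) (hxm : x ≤ m) (t : ℤ) :
    x * (x + t) = ∑ v ∈ range m, (if (v : ℤ) < x then t + 2 * v + 1 else 0) := by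
  rw [sum_range_levels_of_le hx₀ hxm]
  lift x to ℕ using hx₀
  simp only [Int.toNat_natCast]
  induction x with
  | zero => simp
  | succ x ih => rw [sum_range_succ, ← ih (by omega)]; push_cast; ring

theorem Fin.exists_iff_val_lt_of_antitone {n : ℕ} {P : Fin n → Prop} [DecidablePred P]
    (hP : ∀ i j, i ≤ j → P j → P i) : ∃ k ≤ n, ∀ i : Fin n, P i ↔ i.1 < k := by
  refine ⟨#{i | P i}, (card_filter_le _ _).trans_eq (card_fin n), fun i => ⟨fun hi => ?_, ?_⟩⟩
  · have hsub : Iic i ⊆ ({i | P i} : Finset (Fin n)) :=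
      fun j hj => mem_filter.mpr ⟨mem_univ _, hP j i (mem_Iic.mp hj) hi⟩
    have := card_le_card hsub
    rw [Fin.card_Iic] at this
    omega
  · contrapose!
    intro hi
    have hsub : ({i | P i} : Finset (Fin n)) ⊆ Iio i := fun j hj =>
      mem_Iio.mpr (lt_of_not_ge fun hij => hi (hP i j hij (mem_filter.mp hj).2))
    simpa using card_le_card hsub

theorem Fin.le_of_iff_val_lt {n k l : ℕ} {P Q : Fin n → Prop} (hP : ∀ i, P i ↔ i.1 < k)
    (hQ : ∀ i, Q i ↔ i.1 < l) (hln : l ≤ n) (hQP : ∀ i, Q i → P i) : l ≤ k := by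
  by_contra! hkl
  exact lt_irrefl _ ((hP _).mp (hQP ⟨k, by omega⟩ ((hQ _).mpr hkl)))

section Levels

variable {n m : ℕ} {a : Fin n → ℤ}

theorem exists_level_lengths (ha : Antitone a) :
    ∃ k : ℕ → ℕ, Antitone k ∧ (∀ v, k v ≤ n) ∧
      ∀ (v : ℕ) (i : Fin n), (v : ℤ) < a i ↔ i.1 < k v := by
  choose k hkn hk using fun v : ℕ => Fin.exists_iff_val_lt_of_antitone
    (P := fun i => (v : ℤ) < a i) fun i j hij h => h.trans_le (ha hij)
  refine ⟨k, fun v w hvw => ?_, hkn, hk⟩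
  exact Fin.le_of_iff_val_lt (hk v) (hk w) (hkn w) fun i h =>
    lt_of_le_of_lt (by exact_mod_cast hvw) h

theorem casimirSp_eq_sum_levels {k : ℕ → ℕ} (ha₀ : ∀ i, 0 ≤ a i) (ham : ∀ i, a i ≤ m)
    (hkn : ∀ v, k v ≤ n) (hk : ∀ (v : ℕ) (i : Fin n), (v : ℤ) < a i ↔ i.1 < k v) :
    casimirSp n a = ∑ v ∈ range m, (k v : ℤ) * (2 * n + 2 * v + 2 - k v) := by
  calc casimirSp n a
      = ∑ i : Fin n, ∑ v ∈ range m,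
          (if (v : ℤ) < a i then (2 * n - 2 * i : ℤ) + 2 * v + 1 else 0) :=
        sum_congr rfl fun i _ => by rw [← mul_add_eq_sum_range_levels (ha₀ i) (ham i)]; ring
    _ = ∑ v ∈ range m, ∑ i : Fin n,
          (if i.1 < k v then (2 * n + 2 * v + 1 : ℤ) - 2 * i else 0) := by
        rw [sum_comm]
        refine sum_congr rfl fun v _ => sum_congr rfl fun i _ => ?_
        simp only [hk]
        split_ifs <;> ring
    _ = _ := sum_congr rfl fun v _ => by
        rw [Fin.sum_ite_val_lt (hkn v) (fun j : ℕ => (2 * n + 2 * v + 1 : ℤ) - 2 * j),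
          sum_range_sub_two_mul]
        ring

theorem eq_of_level_lengths_eq {b : Fin n → ℤ} {k l : ℕ → ℕ} (ha₀ : ∀ i, 0 ≤ a i)
    (ham : ∀ i, a i ≤ m) (hb₀ : ∀ i, 0 ≤ b i) (hbm : ∀ i, b i ≤ m)
    (hk : ∀ (v : ℕ) (i : Fin n), (v : ℤ) < a i ↔ i.1 < k v)
    (hl : ∀ (v : ℕ) (i : Fin n), (v : ℤ) < b i ↔ i.1 < l v) (hkl : ∀ v < m, k v = l v) :
    a = b := by
  funext i
  rw [eq_sum_range_levels (ha₀ i) (ham i), eq_sum_range_levels (hb₀ i) (hbm i)]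
  refine sum_congr rfl fun v hv => if_congr ?_ rfl rfl
  rw [hk, hl, hkl v (mem_range.mp hv)]

theorem mul_add_le_casimirSp (ha₀ : ∀ i, 0 ≤ a i) (i : Fin n) :
    a i * (a i + 2 * ((n : ℤ) - i.1)) ≤ casimirSp n a := by
  have hterm : ∀ j ∈ (univ : Finset (Fin n)),
      0 ≤ a j * (a j + 2 * (n : ℤ) + 2 - 2 * ((j.1 : ℤ) + 1)) :=
    fun j _ => mul_nonneg (ha₀ j) (by have := ha₀ j; have := j.2; omega)
  calc a i * (a i + 2 * ((n : ℤ) - i.1))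
      = a i * (a i + 2 * (n : ℤ) + 2 - 2 * ((i.1 : ℤ) + 1)) := by ring
    _ ≤ casimirSp n a := single_le_sum hterm (mem_univ i)

theorem le_three_of_casimirSp_lt (hn : 0 < n) (ha : Antitone a) (ha₀ : ∀ i, 0 ≤ a i)
    (hC : casimirSp n a < 8 * n + 16) (i : Fin n) : a i ≤ 3 := by
  have hfirst := mul_add_le_casimirSp ha₀ (⟨0, hn⟩ : Fin n)
  have hfirst_ge := ha (show (⟨0, hn⟩ : Fin n) ≤ i from Nat.zero_le i.1)
  push_cast at hfirst
  nlinarith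

end Levels

section Examples

variable {n : ℕ}

theorem twoEps1TwoEps2Z_nonneg (i : Fin n) : 0 ≤ twoEps1TwoEps2Z n i := by
  unfold twoEps1TwoEps2Z; split_ifs <;> simp

theorem twoEps1TwoEps2Z_le_two (i : Fin n) : twoEps1TwoEps2Z n i ≤ 2 := by
  unfold twoEps1TwoEps2Z; split_ifs <;> simp

theorem twoEps1TwoEps2Z_levels (v : ℕ) (i : Fin n) :
    (v : ℤ) < twoEps1TwoEps2Z n i ↔ i.1 < if v < 2 then 2 else 0 := by
  unfold twoEps1TwoEps2Z; split_ifs <;> omega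

theorem epsSumZ_nonneg (k : ℕ) (i : Fin n) : 0 ≤ epsSumZ n k i := by
  unfold epsSumZ; split_ifs <;> simp

theorem epsSumZ_le_one (k : ℕ) (i : Fin n) : epsSumZ n k i ≤ 1 := by
  unfold epsSumZ; split_ifs <;> simp

theorem epsSumZ_levels (k v : ℕ) (i : Fin n) :
    (v : ℤ) < epsSumZ n k i ↔ i.1 < if v < 1 then k else 0 := by
  unfold epsSumZ; split_ifs <;> omega

theorem casimirSp_twoEps1TwoEps2Z (hn : 2 ≤ n) :
    casimirSp n (twoEps1TwoEps2Z n) = 8 * n + 4 := by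
  rw [casimirSp_eq_sum_levels twoEps1TwoEps2Z_nonneg (fun i => twoEps1TwoEps2Z_le_two i)
    (fun v => by split_ifs <;> omega) twoEps1TwoEps2Z_levels]
  simp only [sum_range_succ, sum_range_zero]
  push_cast
  ring

theorem casimirSp_epsSumZ {k : ℕ} (hkn : k ≤ n) :
    casimirSp n (epsSumZ n k) = k * (2 * n + 2 - k) := by
  rw [casimirSp_eq_sum_levels (epsSumZ_nonneg k) (fun i => epsSumZ_le_one k i)
    (fun v => by split_ifs <;> omega) (epsSumZ_levels k)]
  simp

end Examples

theorem three_level_lengths_of_casimir_eq {n k₀ k₁ k₂ : ℕ} (h₂ : k₂ ≤ k₁) (h₁ : k₁ ≤ k₀)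
    (h₀ : k₀ ≤ n)
    (h : (k₀ : ℤ) * (2 * n + 2 - k₀) + k₁ * (2 * n + 4 - k₁) + k₂ * (2 * n + 6 - k₂)
      = 8 * n + 4) :
    (k₀ = 2 ∧ k₁ = 2 ∧ k₂ = 0) ∨ (n = 7 ∧ k₀ = 6 ∧ k₁ = 0 ∧ k₂ = 0) := by
  have hk₀ : k₀ ≤ 6 := by
    by_contra! h₇
    have : (0 : ℤ) ≤ k₁ * (2 * n + 4 - k₁) := mul_nonneg (by positivity) (by omega)
    have : (0 : ℤ) ≤ k₂ * (2 * n + 6 - k₂) := mul_nonneg (by positivity) (by omega)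
    have : (0 : ℤ) ≤ (k₀ - 7) * (n - k₀) := mul_nonneg (by omega) (by omega)
    nlinarith
  interval_cases k₀ <;> interval_cases k₁ <;> interval_cases k₂ <;> omega

theorem stmt5_general (n : ℕ) (hn : 3 ≤ n) (a : Fin n → ℤ)
    (hmono : ∀ i j : Fin n, i ≤ j → a j ≤ a i)
    (hnonneg : ∀ i, 0 ≤ a i) :
    casimirSp n a = 8 * (n : ℤ) + 4 ↔
      a = twoEps1TwoEps2Z n ∨ (n = 7 ∧ a = epsSumZ n 6) := by
  refine ⟨fun hC => ?_, ?_⟩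
  · have ha₃ := le_three_of_casimirSp_lt (by omega) hmono hnonneg (by omega)
    obtain ⟨k, hk_anti, hkn, hk⟩ := exists_level_lengths hmono
    have hprofile := casimirSp_eq_sum_levels hnonneg ha₃ hkn hk
    simp only [sum_range_succ, sum_range_zero, zero_add, hC] at hprofile
    rcases three_level_lengths_of_casimir_eq (hk_anti (by omega : 1 ≤ 2))
        (hk_anti (by omega : 0 ≤ 1)) (hkn 0) (by push_cast at hprofile ⊢; linarith) with
      ⟨h₀, h₁, h₂⟩ | ⟨rfl, h₀, h₁, h₂⟩
    · refine Or.inl (eq_of_level_lengths_eq hnonneg ha₃ twoEps1TwoEps2Z_nonneg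
        (fun i => (twoEps1TwoEps2Z_le_two i).trans (by norm_num)) hk twoEps1TwoEps2Z_levels
        fun v hv => ?_)
      interval_cases v <;> simp [h₀, h₁, h₂]
    · refine Or.inr ⟨rfl, eq_of_level_lengths_eq hnonneg ha₃ (epsSumZ_nonneg 6)
        (fun i => (epsSumZ_le_one 6 i).trans (by norm_num)) hk (epsSumZ_levels 6)
        fun v hv => ?_⟩
      interval_cases v <;> simp [h₀, h₁, h₂]
  · rintro (rfl | ⟨rfl, rfl⟩)
    · exact casimirSp_twoEps1TwoEps2Z (by omega)
    · norm_num [casimirSp_epsSumZ]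

/-- for `n ≥ 3` and a tuple `a = (a₁,…,aₙ)` of integers with
`a₁ ≥ ⋯ ≥ aₙ ≥ 0` and `a₁+⋯+aₙ` even, one has `C′_n(a) = 8n+4` iff
`a = 2ε₁+2ε₂`, or `n = 7` and `a = ε₁+ε₂+ε₃+ε₄+ε₅+ε₆`. -/
theorem stmt5 (n : ℕ) (hn : 3 ≤ n) (a : Fin n → ℤ)
    (hmono : ∀ i j : Fin n, i ≤ j → a j ≤ a i)
    (hnonneg : ∀ i, 0 ≤ a i)
    (heven : Even (∑ i, a i)) :
    casimirSp n a = 8 * (n : ℤ) + 4 ↔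
      a = twoEps1TwoEps2Z n ∨ (n = 7 ∧ a = epsSumZ n 6) :=
  stmt5_general n hn a hmono hnonneg
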